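/- Let j ≥ 2 and let f ∈ C[0,1] be increasing with x ↦ f(x^{1/j}) convex on [0,1]. Then for all n ≥ j and x ∈ [0,1], f(x) ≤ B_{n,j}(f;x) ≤ B_n(f;x), where B_{n,j} is the AKR operator and B_n the classical Bernstein operator. -/

import Mathlib

open Set Finset

/-- Bernstein basis polynomial `p_{n,k}(x) = C(n,k) x^k (1-x)^{n-k}`. -/
noncomputable def bp (n k : ℕ) (x : ℝ) : ℝ :=
  (n.choose k : ℝ) * x ^ k * (1 - x) ^ (n - k)

/-- AKR node `t_{n,k}^j = (k(k-1)⋯(k-j+1)/(n(n-1)⋯(n-j+1)))^{1/j}`. -/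
noncomputable def akrNode (n j k : ℕ) : ℝ :=
  ((∏ i ∈ Finset.range j, ((k : ℝ) - i)) / (∏ i ∈ Finset.range j, ((n : ℝ) - i))) ^ ((j : ℝ)⁻¹)

/-- Classical Bernstein operator. -/
noncomputable def bern (n : ℕ) (f : ℝ → ℝ) (x : ℝ) : ℝ :=
  ∑ k ∈ Finset.range (n + 1), f ((k : ℝ) / n) * bp n k x

/-- Aldaz–Kounchev–Render operator. -/
noncomputable def akr (n j : ℕ) (f : ℝ → ℝ) (x : ℝ) : ℝ :=
  ∑ k ∈ Finset.range (n + 1), f (akrNode n j k) * bp n k x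

/-- Bivariate tensor-product Bernstein operator. -/
noncomputable def bern2 (n m : ℕ) (f : ℝ → ℝ → ℝ) (x y : ℝ) : ℝ :=
  ∑ i ∈ Finset.range (n + 1), ∑ k ∈ Finset.range (m + 1),
    f ((i : ℝ) / n) ((k : ℝ) / m) * bp n i x * bp m k y

/-- Bivariate tensor-product AKR operator. -/
noncomputable def akr2 (n m j : ℕ) (f : ℝ → ℝ → ℝ) (x y : ℝ) : ℝ :=
  ∑ i ∈ Finset.range (n + 1), ∑ k ∈ Finset.range (m + 1),
    f (akrNode n j i) (akrNode m j k) * bp n i x * bp m k y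

/-!
With `s k = k.descFactorial j / n.descFactorial j` the AKR nodes are `s k ^ (1 / j)`, and the
`j`-th factorial moment of the binomial distribution gives `∑ s k * p_{n,k}(x) = x ^ j`.
Jensen's inequality for the convex `g s = f (s ^ (1 / j))` with the weights `p_{n,k}(x)` thus
gives `f x = g (x ^ j) ≤ B_{n,j}(f; x)`. The upper bound is termwise: `s k ≤ (k / n) ^ j`
because `(k - i) / (n - i) ≤ k / n` for each factor, so every node lies left of `k / n`,
and `f` is increasing.
-/

lemma prod_range_natCast_sub (j k : ℕ) :
    ∏ i ∈ range j, ((k : ℝ) - i) = k.descFactorial j := by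
  rcases le_or_gt j k with hjk | hkj
  · rw [Nat.descFactorial_eq_prod_range, Nat.cast_prod]
    refine prod_congr rfl fun i hi => ?_
    rw [Nat.cast_sub ((mem_range.mp hi).le.trans hjk)]
  · rw [Nat.descFactorial_eq_zero_iff_lt.2 hkj, Nat.cast_zero]
    exact prod_eq_zero (mem_range.mpr hkj) (sub_self _)

lemma akrNode_eq (n j k : ℕ) :
    akrNode n j k = ((k.descFactorial j : ℝ) / n.descFactorial j) ^ ((j : ℝ)⁻¹) := by
  rw [akrNode, prod_range_natCast_sub, prod_range_natCast_sub]

lemma akrNode_nonneg (n j k : ℕ) : 0 ≤ akrNode n j k := by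
  rw [akrNode_eq]
  positivity

lemma bp_nonneg (n k : ℕ) {x : ℝ} (hx : x ∈ Icc (0 : ℝ) 1) : 0 ≤ bp n k x :=
  mul_nonneg (mul_nonneg (Nat.cast_nonneg _) (pow_nonneg hx.1 _)) (pow_nonneg (sub_nonneg.2 hx.2) _)

lemma sum_bp (n : ℕ) (x : ℝ) : ∑ k ∈ range (n + 1), bp n k x = 1 := by
  calc ∑ k ∈ range (n + 1), bp n k x
      = ∑ k ∈ range (n + 1), x ^ k * (1 - x) ^ (n - k) * n.choose k :=
        sum_congr rfl fun k _ => by rw [bp]; ring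
    _ = 1 := by rw [← add_pow, add_sub_cancel, one_pow]

lemma descFactorial_mul_choose (j m n : ℕ) :
    (j + m).descFactorial j * n.choose (j + m) = n.descFactorial j * (n - j).choose m := by
  rw [Nat.descFactorial_eq_factorial_mul_choose, Nat.descFactorial_eq_factorial_mul_choose,
    mul_assoc, mul_assoc, mul_comm ((j + m).choose j), Nat.choose_mul (Nat.le_add_right _ _),
    Nat.add_sub_cancel_left]

lemma descFactorial_mul_bp (j m n : ℕ) (x : ℝ) :
    (j + m).descFactorial j * bp n (j + m) x = n.descFactorial j * x ^ j * bp (n - j) m x := by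
  have hchoose : ((j + m).descFactorial j : ℝ) * n.choose (j + m)
      = n.descFactorial j * (n - j).choose m := mod_cast descFactorial_mul_choose j m n
  rw [bp, bp, Nat.sub_add_eq, pow_add]
  linear_combination (x ^ j * x ^ m * (1 - x) ^ (n - j - m)) * hchoose

lemma sum_descFactorial_mul_bp (n j : ℕ) (x : ℝ) :
    ∑ k ∈ range (n + 1), (k.descFactorial j : ℝ) * bp n k x = n.descFactorial j * x ^ j := by
  rcases lt_or_ge n j with hnj | hjn
  · rw [Nat.descFactorial_eq_zero_iff_lt.2 hnj, Nat.cast_zero, zero_mul]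
    refine sum_eq_zero fun k hk => ?_
    rw [Nat.descFactorial_eq_zero_iff_lt.2 (by grind), Nat.cast_zero, zero_mul]
  rw [show n + 1 = j + (n - j + 1) by omega, sum_range_add]
  have hlow : ∑ k ∈ range j, (k.descFactorial j : ℝ) * bp n k x = 0 :=
    sum_eq_zero fun k hk => by
      rw [Nat.descFactorial_eq_zero_iff_lt.2 (mem_range.mp hk), Nat.cast_zero, zero_mul]
  simp only [hlow, zero_add, descFactorial_mul_bp, ← mul_sum, sum_bp, mul_one]

lemma descFactorial_mul_pow_le (j : ℕ) {k n : ℕ} (hkn : k ≤ n) :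
    k.descFactorial j * n ^ j ≤ k ^ j * n.descFactorial j := by
  have hpow (m : ℕ) : m ^ j = ∏ _i ∈ range j, m := by rw [prod_const, card_range]
  rw [hpow, hpow, Nat.descFactorial_eq_prod_range, Nat.descFactorial_eq_prod_range,
    ← prod_mul_distrib, ← prod_mul_distrib]
  refine prod_le_prod' fun i _ => ?_
  rw [Nat.sub_mul, Nat.mul_sub]
  exact Nat.sub_le_sub_left (by rw [mul_comm k i]; exact Nat.mul_le_mul_left i hkn) _

lemma akrNode_le_div {j k n : ℕ} (hj : 0 < j) (hkn : k ≤ n) : akrNode n j k ≤ k / n := by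
  rcases lt_or_ge n j with hnj | hjn
  · -- the denominator `n.descFactorial j` vanishes, so the node is `0 ^ (1 / j) = 0`
    rw [akrNode_eq, Nat.descFactorial_eq_zero_iff_lt.2 hnj, Nat.cast_zero, div_zero,
      Real.zero_rpow (inv_ne_zero (mod_cast hj.ne'))]
    positivity
  have hD : (0 : ℝ) < n.descFactorial j := mod_cast Nat.descFactorial_pos.2 hjn
  have hratio : (k.descFactorial j : ℝ) / n.descFactorial j ≤ ((k : ℝ) / n) ^ j := by
    have hn : (0 : ℝ) < n := mod_cast hj.trans_le hjn
    rw [div_pow, div_le_div_iff₀ hD (by positivity)]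
    exact_mod_cast descFactorial_mul_pow_le j hkn
  calc akrNode n j k ≤ (((k : ℝ) / n) ^ j) ^ ((j : ℝ)⁻¹) := by
        rw [akrNode_eq]
        exact Real.rpow_le_rpow (by positivity) hratio (by positivity)
    _ = k / n := Real.pow_rpow_inv_natCast (by positivity) hj.ne'

lemma div_mem_Icc {k n : ℕ} (hkn : k ≤ n) : (k : ℝ) / n ∈ Icc (0 : ℝ) 1 :=
  ⟨by positivity, div_le_one_of_le₀ (mod_cast hkn) (Nat.cast_nonneg n)⟩

theorem le_akr {j n : ℕ} (hj : 0 < j) (hjn : j ≤ n) {f : ℝ → ℝ}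
    (hconv : ConvexOn ℝ (Icc 0 1) (fun x => f (x ^ ((j : ℝ)⁻¹))))
    {x : ℝ} (hx : x ∈ Icc (0 : ℝ) 1) : f x ≤ akr n j f x := by
  have hD : (0 : ℝ) < n.descFactorial j := mod_cast Nat.descFactorial_pos.2 hjn
  set s : ℕ → ℝ := fun k => (k.descFactorial j : ℝ) / n.descFactorial j
  have hs_mem : ∀ k ∈ range (n + 1), s k ∈ Icc (0 : ℝ) 1 := fun k hk =>
    ⟨by positivity, div_le_one_of_le₀
      (mod_cast Nat.descFactorial_le j (Nat.lt_succ_iff.mp (mem_range.mp hk))) hD.le⟩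
  have hmean : ∑ k ∈ range (n + 1), bp n k x • s k = x ^ j := by
    simp only [s, smul_eq_mul, mul_comm (bp n _ x), div_mul_eq_mul_div]
    rw [← sum_div, sum_descFactorial_mul_bp, mul_div_cancel_left₀ _ hD.ne']
  have hjensen := hconv.map_sum_le (fun k _ => bp_nonneg n k hx) (sum_bp n x) hs_mem
  rw [hmean, Real.pow_rpow_inv_natCast hx.1 hj.ne'] at hjensen
  simpa only [akr, akrNode_eq, smul_eq_mul, mul_comm (bp n _ x)] using hjensen

theorem akr_le_bern {j n : ℕ} (hj : 0 < j) {f : ℝ → ℝ}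
    (hmono : MonotoneOn f (Icc 0 1)) {x : ℝ} (hx : x ∈ Icc (0 : ℝ) 1) :
    akr n j f x ≤ bern n f x := by
  refine sum_le_sum fun k hk => mul_le_mul_of_nonneg_right ?_ (bp_nonneg n k hx)
  have hkn : k ≤ n := Nat.lt_succ_iff.mp (mem_range.mp hk)
  have hle := akrNode_le_div hj hkn
  exact hmono ⟨akrNode_nonneg n j k, hle.trans (div_mem_Icc hkn).2⟩ (div_mem_Icc hkn) hle

theorem stmt7_general (j n : ℕ) (hj : 2 ≤ j) (hn : j ≤ n) (f : ℝ → ℝ)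
    (hmono : MonotoneOn f (Icc 0 1))
    (hconv : ConvexOn ℝ (Icc 0 1) (fun x => f (x ^ ((j : ℝ)⁻¹)))) :
    ∀ x ∈ Icc (0:ℝ) 1, f x ≤ akr n j f x ∧ akr n j f x ≤ bern n f x := fun x hx =>
  ⟨le_akr (by omega) hn hconv hx, akr_le_bern (by omega) hmono hx⟩

theorem stmt7 (j n : ℕ) (hj : 2 ≤ j) (hn : j ≤ n) (f : ℝ → ℝ)
    (hfc : ContinuousOn f (Icc 0 1))
    (hmono : MonotoneOn f (Icc 0 1))
    (hconv : ConvexOn ℝ (Icc 0 1) (fun x => f (x ^ ((j : ℝ)⁻¹)))) :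
    ∀ x ∈ Icc (0:ℝ) 1, f x ≤ akr n j f x ∧ akr n j f x ≤ bern n f x :=
  stmt7_general j n hj hn f hmono hconv
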